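/- Let φ be a K-algebra endomorphism of K[x,y,z] fixing z, with φ(x) and φ(y) homogeneous of degrees a and b for the grading deg x = a, deg y = b, deg z = -c (a,b,c > 0). If the substitutions f̃ = φ(x)(u,v,1), g̃ = φ(y)(u,v,1) define an automorphism of K[u,v], then φ is injective. -/
import Mathlib


open MvPolynomial

variable {K : Type*}

/-- Homogeneity for the ℤ-grading of `K[x,y,z]` with `deg x = a, deg y = b, deg z = -c`. -/
def IsWtHom [CommRing K] (a b c : ℕ) (p : MvPolynomial (Fin 3) K) (d : ℤ) : Prop :=
  ∀ m ∈ p.support, (a : ℤ) * (m 0 : ℤ) + (b : ℤ) * (m 1 : ℤ) - (c : ℤ) * (m 2 : ℤ) = d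

/-- The substitution `z = 1`. -/
noncomputable def subZ [CommRing K] :
    MvPolynomial (Fin 3) K →ₐ[K] MvPolynomial (Fin 2) K :=
  aeval ![X 0, X 1, 1]

section Aux

variable [CommRing K]

/-- The weight function. -/
def wfun (a b c : ℕ) : Fin 3 → ℤ := ![(a : ℤ), (b : ℤ), -(c : ℤ)]

lemma weight_wfun (a b c : ℕ) (m : Fin 3 →₀ ℕ) :
    Finsupp.weight (wfun a b c) m
      = (a : ℤ) * (m 0 : ℤ) + (b : ℤ) * (m 1 : ℤ) - (c : ℤ) * (m 2 : ℤ) := by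
  rw [Finsupp.weight_apply, Finsupp.sum_fintype]
  · simp [wfun, Fin.sum_univ_three, nsmul_eq_mul, mul_comm]
    ring
  · intro i
    exact zero_smul ℕ _

lemma isWtHom_iff (a b c : ℕ) (p : MvPolynomial (Fin 3) K) (d : ℤ) :
    IsWtHom a b c p d ↔ p.IsWeightedHomogeneous (wfun a b c) d := by
  constructor
  · intro h m hm
    rw [weight_wfun]
    exact h m (mem_support_iff.mpr hm)
  · intro h m hm
    rw [← weight_wfun a b c m]
    exact h (mem_support_iff.mp hm)

lemma MvPolynomial.IsWeightedHomogeneous.pow' {σ : Type*} {w : σ → ℤ} {q : MvPolynomial σ K} {e : ℤ}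
    (h : q.IsWeightedHomogeneous w e) (k : ℕ) :
    (q ^ k).IsWeightedHomogeneous w (k • e) := by
  induction k with
  | zero => simpa using isWeightedHomogeneous_one K w
  | succ n ih =>
      rw [pow_succ, succ_nsmul]
      exact ih.mul h

lemma phi_monomial_hom (a b c : ℕ)
    (φ : MvPolynomial (Fin 3) K →ₐ[K] MvPolynomial (Fin 3) K)
    (hX : ∀ i, (φ (X i)).IsWeightedHomogeneous (wfun a b c) (wfun a b c i))
    (m : Fin 3 →₀ ℕ) (r : K) :
    (φ (monomial m r)).IsWeightedHomogeneous (wfun a b c) (Finsupp.weight (wfun a b c) m) := by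
  have h0 : φ (monomial m r)
      = C r * ∏ i ∈ m.support, (φ (X i)) ^ (m i) := by
    rw [monomial_eq, map_mul, Finsupp.prod, map_prod]
    congr 1
    · exact φ.commutes r
    · exact Finset.prod_congr rfl fun i _ => map_pow φ _ _
  rw [h0]
  have h1 : (∏ i ∈ m.support, (φ (X i)) ^ (m i)).IsWeightedHomogeneous (wfun a b c)
      (∑ i ∈ m.support, (m i) • (wfun a b c i)) :=
    IsWeightedHomogeneous.prod _ _ _ fun i _ => (hX i).pow' (m i)
  have h2 : Finsupp.weight (wfun a b c) m = ∑ i ∈ m.support, (m i) • (wfun a b c i) := by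
    rw [Finsupp.weight_apply]; rfl
  rw [h2, ← zero_add (∑ i ∈ m.support, (m i) • (wfun a b c i))]
  exact (isWeightedHomogeneous_C _ r).mul h1

lemma phi_hom (a b c : ℕ)
    (φ : MvPolynomial (Fin 3) K →ₐ[K] MvPolynomial (Fin 3) K)
    (hX : ∀ i, (φ (X i)).IsWeightedHomogeneous (wfun a b c) (wfun a b c i))
    {p : MvPolynomial (Fin 3) K} {d : ℤ}
    (hp : p.IsWeightedHomogeneous (wfun a b c) d) :
    (φ p).IsWeightedHomogeneous (wfun a b c) d := by
  have : φ p = ∑ m ∈ p.support, φ (monomial m (coeff m p)) := by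
    conv_lhs => rw [p.as_sum]
    rw [map_sum]
  rw [this]
  apply IsWeightedHomogeneous.sum
  intro m hm
  have := phi_monomial_hom a b c φ hX m (coeff m p)
  rwa [hp (mem_support_iff.mp hm)] at this

/-- `subZ` of a monomial. -/
lemma subZ_monomial (m : Fin 3 →₀ ℕ) (r : K) :
    subZ (monomial m r)
      = monomial (Finsupp.single (0 : Fin 2) (m 0) + Finsupp.single (1 : Fin 2) (m 1)) r := by
  rw [subZ, aeval_monomial, Finsupp.prod_fintype _ _ (fun i => pow_zero _)]
  rw [Fin.prod_univ_three]
  simp only [Matrix.cons_val_zero, Matrix.cons_val_one, Matrix.head_cons, Matrix.cons_val_two,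
    Matrix.tail_cons, one_pow, mul_one, algebraMap_eq]
  rw [X_pow_eq_monomial, X_pow_eq_monomial, monomial_mul, C_mul_monomial]
  rw [mul_one, mul_one]

/-- `subZ` is injective on weighted-homogeneous polynomials. -/
lemma subZ_inj_hom (a b c : ℕ) (hc : 0 < c) {p : MvPolynomial (Fin 3) K} {d : ℤ}
    (hp : p.IsWeightedHomogeneous (wfun a b c) d) (h0 : subZ p = 0) : p = 0 := by
  classical
  set e : (Fin 3 →₀ ℕ) → (Fin 2 →₀ ℕ) :=
    fun m => Finsupp.single (0 : Fin 2) (m 0) + Finsupp.single (1 : Fin 2) (m 1) with he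
  have hsub : subZ p = ∑ m ∈ p.support, monomial (e m) (coeff m p) := by
    conv_lhs => rw [p.as_sum]
    rw [map_sum]
    exact Finset.sum_congr rfl fun m _ => subZ_monomial m (coeff m p)
  -- injectivity of e on the support
  have hinj : ∀ m ∈ p.support, ∀ m' ∈ p.support, e m = e m' → m = m' := by
    intro m hm m' hm' hee
    have h01 : m 0 = m' 0 ∧ m 1 = m' 1 := by
      constructor
      · have := congrArg (fun f : Fin 2 →₀ ℕ => f 0) hee
        simpa [he, Finsupp.single_apply] using this
      · have := congrArg (fun f : Fin 2 →₀ ℕ => f 1) hee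
        simpa [he, Finsupp.single_apply] using this
    have hw : Finsupp.weight (wfun a b c) m = Finsupp.weight (wfun a b c) m' := by
      rw [hp (mem_support_iff.mp hm), hp (mem_support_iff.mp hm')]
    rw [weight_wfun, weight_wfun, h01.1, h01.2] at hw
    have h2 : (c : ℤ) * (m 2 : ℤ) = (c : ℤ) * (m' 2 : ℤ) := by linarith
    have hcne : (c : ℤ) ≠ 0 := by exact_mod_cast hc.ne'
    have h2' : (m 2 : ℤ) = (m' 2 : ℤ) := mul_left_cancel₀ hcne h2
    have h2'' : m 2 = m' 2 := by exact_mod_cast h2'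
    ext i
    fin_cases i
    · exact h01.1
    · exact h01.2
    · exact h2''
  -- conclude all coefficients vanish
  by_contra hne
  obtain ⟨m₀, hm₀⟩ := support_nonempty.mpr hne
  have : coeff (e m₀) (subZ p) = coeff m₀ p := by
    rw [hsub, coeff_sum]
    rw [Finset.sum_eq_single m₀]
    · simp [coeff_monomial]
    · intro m hm hmne
      rw [coeff_monomial, if_neg]
      intro hee
      exact hmne (hinj m hm m₀ hm₀ hee)
    · intro h; exact absurd hm₀ h
  rw [h0, coeff_zero] at this
  exact (mem_support_iff.mp hm₀) this.symm

end Aux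

/-- if `φ` is a `K`-algebra endomorphism of `K[x,y,z]` fixing `z`, with
`φ(x)`, `φ(y)` homogeneous of degrees `a`, `b`, and the substitution `z = 1` of
`(φ(x), φ(y))` defines an automorphism of `K[u,v]`, then `φ` is injective. -/
theorem graded_endo_injective_of_restriction_aut [Field K] [IsAlgClosed K] [CharZero K]
    (a b c : ℕ) (ha : 0 < a) (hb : 0 < b) (hc : 0 < c)
    (φ : MvPolynomial (Fin 3) K →ₐ[K] MvPolynomial (Fin 3) K)
    (hz : φ (X 2) = X 2)
    (hx : IsWtHom a b c (φ (X 0)) a) (hy : IsWtHom a b c (φ (X 1)) b)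
    (hres : Function.Bijective
      (aeval ![subZ (φ (X 0)), subZ (φ (X 1))] :
        MvPolynomial (Fin 2) K →ₐ[K] MvPolynomial (Fin 2) K)) :
    Function.Injective φ := by
  classical
  set w := wfun a b c with hw
  set ψ : MvPolynomial (Fin 2) K →ₐ[K] MvPolynomial (Fin 2) K :=
    aeval ![subZ (φ (X 0)), subZ (φ (X 1))] with hψ
  -- homogeneity of the images of the variables
  have hX : ∀ i, (φ (X i)).IsWeightedHomogeneous w (w i) := by
    intro i
    fin_cases i
    · simpa [hw, wfun] using (isWtHom_iff a b c (φ (X 0)) a).mp hx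
    · simpa [hw, wfun] using (isWtHom_iff a b c (φ (X 1)) b).mp hy
    · rw [show ((⟨2, by norm_num⟩ : Fin 3)) = (2 : Fin 3) from rfl, hz]
      simpa [hw, wfun] using isWeightedHomogeneous_X K w (2 : Fin 3)
  -- the commuting square : subZ ∘ φ = ψ ∘ subZ
  have hcomm : (subZ.comp φ : MvPolynomial (Fin 3) K →ₐ[K] MvPolynomial (Fin 2) K)
      = ψ.comp subZ := by
    apply MvPolynomial.algHom_ext
    intro i
    fin_cases i
    · simp [subZ, hψ]
    · simp [subZ, hψ]
    · rw [show ((⟨2, by norm_num⟩ : Fin 3)) = (2 : Fin 3) from rfl]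
      simp [AlgHom.comp_apply, hz, subZ]
  rw [injective_iff_map_eq_zero]
  intro p hp0
  -- each weighted homogeneous component of p is killed by φ
  have hcomp : ∀ d : ℤ, φ (weightedHomogeneousComponent w d p) = 0 := by
    intro d₀
    have hfin : (Function.support fun d => weightedHomogeneousComponent w d p).Finite :=
      weightedHomogeneousComponent_finsupp p
    have hfin2 : (Function.support fun d => φ (weightedHomogeneousComponent w d p)).Finite := by
      apply hfin.subset
      intro d hd
      simp only [Function.mem_support] at hd ⊢
      intro hzero
      exact hd (by rw [hzero, map_zero])
    have hmap : φ (∑ᶠ d : ℤ, weightedHomogeneousComponent w d p)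
        = ∑ᶠ d : ℤ, φ (weightedHomogeneousComponent w d p) :=
      AddMonoidHom.map_finsum φ.toAddMonoidHom hfin
    have hsum : (∑ᶠ d : ℤ, φ (weightedHomogeneousComponent w d p)) = 0 := by
      rw [← hmap, sum_weightedHomogeneousComponent]
      exact hp0
    have key : ∀ d : ℤ, (φ (weightedHomogeneousComponent w d p)).IsWeightedHomogeneous w d :=
      fun d => phi_hom a b c φ hX
        (weightedHomogeneousComponent_isWeightedHomogeneous (w := w) (n := d) (φ := p))
    have hmap2 : weightedHomogeneousComponent w d₀
          (∑ᶠ d : ℤ, φ (weightedHomogeneousComponent w d p))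
        = ∑ᶠ d : ℤ, weightedHomogeneousComponent w d₀ (φ (weightedHomogeneousComponent w d p)) :=
      AddMonoidHom.map_finsum (weightedHomogeneousComponent w d₀).toAddMonoidHom hfin2
    have this1 : (∑ᶠ d : ℤ, weightedHomogeneousComponent w d₀
        (φ (weightedHomogeneousComponent w d p))) = 0 := by
      rw [← hmap2, hsum, map_zero]
    rw [finsum_eq_single _ d₀
      (fun d hd => (key d).weightedHomogeneousComponent_ne d₀ (fun h => hd h.symm))] at this1
    rwa [(key d₀).weightedHomogeneousComponent_same] at this1
  -- hence each component vanishes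
  have hcomp0 : ∀ d : ℤ, weightedHomogeneousComponent w d p = 0 := by
    intro d
    apply subZ_inj_hom a b c hc
      (weightedHomogeneousComponent_isWeightedHomogeneous (w := w) (n := d) (φ := p))
    have : ψ (subZ (weightedHomogeneousComponent w d p)) = 0 := by
      have := congrArg (fun q => q (weightedHomogeneousComponent w d p)) hcomm
      simp only [AlgHom.comp_apply] at this
      rw [← this, hcomp d, map_zero]
    have hψ0 : ψ 0 = 0 := map_zero ψ
    exact hres.1 (by rw [this, hψ0])
  -- conclude
  calc p = ∑ᶠ d : ℤ, weightedHomogeneousComponent w d p :=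
        (sum_weightedHomogeneousComponent w p).symm
    _ = 0 := by simp [hcomp0]
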